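/- arXiv:1511.00137 — 2 statements merged into one kernel-verified Lean document; each statement's English description precedes it below -/
import Mathlib

section
/- Let u ∈ (0,1), let x_0, …, x_n be distinct real numbers, let ζ ∈ ℝ, let 0 ≤ k ≤ n and 0 ≤ m ≤ n, and assume (5n−m+3)·u < 1. Suppose: (i) ŵ' = (−1)^{n−m} Σ_{I ⊆ {0,…,n}\{k}, |I| = n−m} (∏_{i∈I} (x_i − ζ))·(1+θ'_I) with each |θ'_I| ≤ γ_{3n−m+1} (the representation obtained by applying the partial-products computation to the shifted points x_j − ζ, each shift being a subtraction with relative error at most u); (ii) ŵ_k = w_k·(1+θ'') with |θ''| ≤ γ_{2n}, where w_k = 1/∏_{j≠k}(x_k − x_j); and (iii) the computed weight is ŵ_{k,m} = m!·ŵ_k·ŵ'·(1+δ₁)(1+δ₂) with |δ₁|, |δ₂| ≤ u. Then there exist real numbers θ_I indexed by the (n−m)-element subsets I of {0,…,n}\{k}, with |θ_I| ≤ γ_{5n−m+3}, such that ŵ_{k,m} = (−1)^{n−m}·m!·w_k·Σ_{I} (∏_{i∈I} (x_i − ζ))·(1+θ_I). -/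
/-- `γ_k = k·u/(1 − k·u)`, the standard bound for the accumulated relative error of
`k` floating point operations with unit roundoff `u`. -/
noncomputable def gam (u : ℝ) (k : ℕ) : ℝ := k * u / (1 - k * u)

/-!
Every factor in `ŵ_{k,m} = m!·ŵ_k·ŵ'·(1+δ₁)(1+δ₂)` except the exact quantities is of the form
`1 + θ` with `|θ| ≤ γ_p`, and such factors compose: `(1 + θ_p)(1 + θ_q) = 1 + θ_{p+q}`, because
`1 + γ_p = 1/(1 − p u)` and `(1 − p u)(1 − q u) ≥ 1 − (p + q) u`. Collecting the scalar factor
`(1+θ'')(1+δ₁)(1+δ₂) = 1 + θ_{2n+2}` into each summand of `ŵ'` gives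
`θ_I` with `|θ_I| ≤ γ_{(3n−m+1)+(2n+2)} = γ_{5n−m+3}`.
-/

section Gamma

variable {u : ℝ}

lemma one_add_gam {p : ℕ} (h : (p : ℝ) * u < 1) : 1 + gam u p = (1 - p * u)⁻¹ := by
  have : 1 - (p : ℝ) * u ≠ 0 := by linarith
  unfold gam
  field_simp
  ring

lemma gam_nonneg (hu : 0 ≤ u) {p : ℕ} (h : (p : ℝ) * u < 1) : 0 ≤ gam u p :=
  div_nonneg (by positivity) (by linarith)

lemma le_gam_one (hu : 0 ≤ u) (h : u < 1) : u ≤ gam u 1 := by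
  unfold gam
  rw [Nat.cast_one, one_mul, le_div_iff₀ (by linarith)]
  nlinarith

lemma one_add_gam_mul_one_add_gam_le (hu : 0 ≤ u) {p q : ℕ} (h : ((p + q : ℕ) : ℝ) * u < 1) :
    (1 + gam u p) * (1 + gam u q) ≤ 1 + gam u (p + q) := by
  push_cast at h
  have hpq : (0 : ℝ) ≤ p * q * u ^ 2 := by positivity
  rw [one_add_gam (by nlinarith), one_add_gam (by nlinarith), one_add_gam (by push_cast; linarith),
    ← mul_inv]
  exact inv_anti₀ (by push_cast; linarith) (by push_cast; nlinarith)

lemma abs_one_add_mul_one_add_sub_one_le (hu : 0 ≤ u) {p q : ℕ}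
    (h : ((p + q : ℕ) : ℝ) * u < 1) {a b : ℝ} (ha : |a| ≤ gam u p) (hb : |b| ≤ gam u q) :
    |(1 + a) * (1 + b) - 1| ≤ gam u (p + q) := by
  have hp : (p : ℝ) * u < 1 := by push_cast at h; nlinarith
  have hab : |a| * |b| ≤ gam u p * gam u q :=
    mul_le_mul ha hb (abs_nonneg b) (gam_nonneg hu hp)
  calc |(1 + a) * (1 + b) - 1| = |a + b + a * b| := by ring_nf
    _ ≤ |a| + |b| + |a| * |b| := by
      rw [← abs_mul]
      exact (abs_add_le _ _).trans (by gcongr; exact abs_add_le a b)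
    _ ≤ (1 + gam u p) * (1 + gam u q) - 1 := by linarith
    _ ≤ gam u (p + q) := by linarith [one_add_gam_mul_one_add_gam_le hu h]

end Gamma

theorem stmt_3_general (u : ℝ) (hu : 0 < u) (n k m : ℕ) (x : ℕ → ℝ) (ζ : ℝ)
    (hm : m ≤ n) (hnu : ((5 * n - m + 3 : ℕ) : ℝ) * u < 1)
    (w' wkhat wkmhat : ℝ)
    (hw' : ∃ θ' : Finset ℕ → ℝ,
      (∀ I ∈ ((Finset.range (n + 1)).erase k).powersetCard (n - m),
        |θ' I| ≤ gam u (3 * n - m + 1)) ∧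
      w' = (-1 : ℝ) ^ (n - m) *
        ∑ I ∈ ((Finset.range (n + 1)).erase k).powersetCard (n - m),
          (∏ i ∈ I, (x i - ζ)) * (1 + θ' I))
    (hwk : ∃ θ'' : ℝ, |θ''| ≤ gam u (2 * n) ∧
      wkhat = (1 / ∏ j ∈ (Finset.range (n + 1)).erase k, (x k - x j)) * (1 + θ''))
    (hwkm : ∃ δ₁ δ₂ : ℝ, |δ₁| ≤ u ∧ |δ₂| ≤ u ∧
      wkmhat = (m.factorial : ℝ) * wkhat * w' * (1 + δ₁) * (1 + δ₂)) :
    ∃ θ : Finset ℕ → ℝ,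
      (∀ I ∈ ((Finset.range (n + 1)).erase k).powersetCard (n - m),
        |θ I| ≤ gam u (5 * n - m + 3)) ∧
      wkmhat = (-1 : ℝ) ^ (n - m) * (m.factorial : ℝ) *
        (1 / ∏ j ∈ (Finset.range (n + 1)).erase k, (x k - x j)) *
        ∑ I ∈ ((Finset.range (n + 1)).erase k).powersetCard (n - m),
          (∏ i ∈ I, (x i - ζ)) * (1 + θ I) := by
  obtain ⟨θ', hθ', rfl⟩ := hw'
  obtain ⟨θ'', hθ'', rfl⟩ := hwk
  obtain ⟨δ₁, δ₂, hδ₁, hδ₂, rfl⟩ := hwkm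
  have hlt {t : ℕ} (ht : t ≤ 5 * n - m + 3) : (t : ℝ) * u < 1 :=
    lt_of_le_of_lt (by gcongr) hnu
  have hu1 : u < 1 := by simpa using hlt (t := 1) (by omega)
  have hδ : |(1 + δ₁) * (1 + δ₂) - 1| ≤ gam u (1 + 1) :=
    abs_one_add_mul_one_add_sub_one_le hu.le (hlt (by omega))
      (hδ₁.trans (le_gam_one hu.le hu1)) (hδ₂.trans (le_gam_one hu.le hu1))
  set η := (1 + θ'') * ((1 + δ₁) * (1 + δ₂))
  have hη : |η - 1| ≤ gam u (2 * n + 2) := by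
    simpa using abs_one_add_mul_one_add_sub_one_le hu.le (hlt (by omega)) hθ''
      (b := (1 + δ₁) * (1 + δ₂) - 1) (by simpa using hδ)
  refine ⟨fun I => (1 + θ' I) * η - 1, fun I hI => ?_, ?_⟩
  · rw [show 5 * n - m + 3 = (3 * n - m + 1) + (2 * n + 2) by omega]
    simpa using abs_one_add_mul_one_add_sub_one_le hu.le (hlt (by omega)) (hθ' I hI)
      (b := η - 1) (by simpa using hη)
  · simp only [add_sub_cancel, ← mul_assoc _ _ η, ← Finset.sum_mul]
    ring

/-- Rounding error representation for the computed finite difference weight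
`ŵ_{k,m} = m!·ŵ_k·ŵ'·(1+δ₁)(1+δ₂)` at the point `ζ`:
`ŵ_{k,m} = (−1)^{n−m} m! w_k Σ_{I} (∏_{i∈I}(x_i−ζ))(1+θ_I)` with `|θ_I| ≤ γ_{5n−m+3}`. -/
theorem stmt_3 (u : ℝ) (hu : 0 < u) (hu1 : u < 1) (n k m : ℕ) (x : ℕ → ℝ) (ζ : ℝ)
    (hx : ∀ i ≤ n, ∀ j ≤ n, i ≠ j → x i ≠ x j)
    (hk : k ≤ n) (hm : m ≤ n) (hnu : ((5 * n - m + 3 : ℕ) : ℝ) * u < 1)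
    (w' wkhat wkmhat : ℝ)
    (hw' : ∃ θ' : Finset ℕ → ℝ,
      (∀ I ∈ ((Finset.range (n + 1)).erase k).powersetCard (n - m),
        |θ' I| ≤ gam u (3 * n - m + 1)) ∧
      w' = (-1 : ℝ) ^ (n - m) *
        ∑ I ∈ ((Finset.range (n + 1)).erase k).powersetCard (n - m),
          (∏ i ∈ I, (x i - ζ)) * (1 + θ' I))
    (hwk : ∃ θ'' : ℝ, |θ''| ≤ gam u (2 * n) ∧
      wkhat = (1 / ∏ j ∈ (Finset.range (n + 1)).erase k, (x k - x j)) * (1 + θ''))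
    (hwkm : ∃ δ₁ δ₂ : ℝ, |δ₁| ≤ u ∧ |δ₂| ≤ u ∧
      wkmhat = (m.factorial : ℝ) * wkhat * w' * (1 + δ₁) * (1 + δ₂)) :
    ∃ θ : Finset ℕ → ℝ,
      (∀ I ∈ ((Finset.range (n + 1)).erase k).powersetCard (n - m),
        |θ I| ≤ gam u (5 * n - m + 3)) ∧
      wkmhat = (-1 : ℝ) ^ (n - m) * (m.factorial : ℝ) *
        (1 / ∏ j ∈ (Finset.range (n + 1)).erase k, (x k - x j)) *
        ∑ I ∈ ((Finset.range (n + 1)).erase k).powersetCard (n - m),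
          (∏ i ∈ I, (x i - ζ)) * (1 + θ I) :=
  stmt_3_general u hu n k m x ζ hm hnu w' wkhat wkmhat hw' hwk hwkm
end

section
/- Fix integers r ≥ 1 and k ≥ 1. With x_j = cos(jπ/n) the Chebyshev points, define P_r^{0,k}(n) = Σ_{j=1, j≠k}^{n} (1 − cos(jπ/n))^{−r} (the power sum at the node x_0 = 1 with the node x_k excluded). Then lim_{n→∞} P_r^{0,k}(n)/n^{2r} = (2^r/π^{2r})·(ζ(2r) − 1/k^{2r}), where ζ is the Riemann zeta function. -/
/-!
Writing `1 - cos x = (x²/2) sinc(x/2)²` shows `n² (1 - cos (jπ/n)) → (jπ)²/2` for each fixed `j`,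
so the `j`-th term of `P_r^{0,k}(n)/n^{2r}` tends to `2^r/(π^{2r} j^{2r})`. Jordan's inequality
`1 - cos x ≥ 2x²/π²` on `[-π, π]` bounds that term by `2^{-r} j^{-2r}` uniformly in `n`, which is
summable for `r ≥ 1`, so Tannery's theorem lets us pass to the limit under the sum.
-/

open Filter Finset Real Topology

theorem Real.one_sub_cos_eq_sq_mul_sinc_sq (x : ℝ) : 1 - cos x = x ^ 2 / 2 * sinc (x / 2) ^ 2 := by
  rcases eq_or_ne x 0 with rfl | hx
  · simp
  rw [sinc_of_ne_zero (by positivity), div_pow, sin_sq_eq_half_sub]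
  field_simp

theorem tendsto_natCast_sq_mul_one_sub_cos_div (c : ℝ) :
    Tendsto (fun n : ℕ => (n : ℝ) ^ 2 * (1 - cos (c / n))) atTop (𝓝 (c ^ 2 / 2)) := by
  have hsinc : Tendsto (fun n : ℕ => sinc (c / n / 2)) atTop (𝓝 1) := by
    have h0 : Tendsto (fun n : ℕ => c / n / 2) atTop (𝓝 0) := by
      simpa using (tendsto_const_div_atTop_nhds_zero_nat c).div_const 2
    exact (continuous_sinc.tendsto' 0 1 sinc_zero).comp h0
  have hlim : Tendsto (fun n : ℕ => c ^ 2 / 2 * sinc (c / n / 2) ^ 2) atTop (𝓝 (c ^ 2 / 2)) := by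
    simpa using (hsinc.pow 2).const_mul (c ^ 2 / 2)
  refine hlim.congr' ?_
  filter_upwards [eventually_ne_atTop 0] with n hn
  rw [one_sub_cos_eq_sq_mul_sinc_sq]
  field_simp

theorem two_mul_sq_le_natCast_sq_mul_one_sub_cos {j n : ℕ} (hjn : j ≤ n) :
    2 * (j : ℝ) ^ 2 ≤ (n : ℝ) ^ 2 * (1 - cos (j * π / n)) := by
  rcases Nat.eq_zero_or_pos n with rfl | hn
  · simp_all
  have hn' : (0 : ℝ) < n := by exact_mod_cast hn
  have hx : |j * π / n| ≤ π := by
    rw [abs_of_nonneg (by positivity), div_le_iff₀ hn', mul_comm π]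
    gcongr
  have hjordan := cos_le_one_sub_mul_cos_sq hx
  calc 2 * (j : ℝ) ^ 2 = n ^ 2 * (2 / π ^ 2 * (j * π / n) ^ 2) := by field_simp
    _ ≤ _ := by gcongr; linarith

/-- The `j`-th summand of `P_r^{0,k}(n) / n^{2r}`. -/
noncomputable def chebyshevScaledTerm (r n j : ℕ) : ℝ :=
  (((n : ℝ) ^ 2 * (1 - cos (j * π / n))) ^ r)⁻¹

theorem sum_div_pow_eq_sum_chebyshevScaledTerm (r n : ℕ) (s : Finset ℕ) :
    (∑ j ∈ s, 1 / (1 - cos (j * π / n)) ^ r) / (n : ℝ) ^ (2 * r) =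
      ∑ j ∈ s, chebyshevScaledTerm r n j := by
  rw [sum_div]
  refine sum_congr rfl fun j _ => ?_
  rw [chebyshevScaledTerm, mul_pow, ← pow_mul]
  ring

theorem chebyshevScaledTerm_nonneg (r n j : ℕ) : 0 ≤ chebyshevScaledTerm r n j := by
  have : 0 ≤ 1 - cos (j * π / n) := sub_nonneg.2 (cos_le_one _)
  unfold chebyshevScaledTerm
  positivity

theorem chebyshevScaledTerm_le {r n j : ℕ} (hj : j ≠ 0) (hjn : j ≤ n) :
    chebyshevScaledTerm r n j ≤ (2 ^ r)⁻¹ * ((j : ℝ) ^ (2 * r))⁻¹ := by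
  rw [pow_mul, ← mul_inv, ← mul_pow]
  exact inv_anti₀ (by positivity)
    (pow_le_pow_left₀ (by positivity) (two_mul_sq_le_natCast_sq_mul_one_sub_cos hjn) r)

theorem tendsto_chebyshevScaledTerm (r : ℕ) {j : ℕ} (hj : j ≠ 0) :
    Tendsto (chebyshevScaledTerm r · j) atTop
      (𝓝 (2 ^ r / π ^ (2 * r) * ((j : ℝ) ^ (2 * r))⁻¹)) := by
  have hlim : ((j * π) ^ 2 / 2) ^ r ≠ 0 := by positivity
  have := ((tendsto_natCast_sq_mul_one_sub_cos_div (j * π)).pow r).inv₀ hlim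
  convert this using 2
  · simp only [chebyshevScaledTerm, mul_div_assoc]
  · rw [mul_pow, div_pow, inv_div, mul_pow, ← pow_mul, ← pow_mul]
    ring

theorem tendsto_sum_erase_chebyshevScaledTerm {r : ℕ} (hr : r ≠ 0) (k : ℕ) :
    Tendsto (fun n => ∑ j ∈ (Icc 1 n).erase k, chebyshevScaledTerm r n j) atTop
      (𝓝 (2 ^ r / π ^ (2 * r) * (∑' j : ℕ, ((j : ℝ) ^ (2 * r))⁻¹ - ((k : ℝ) ^ (2 * r))⁻¹))) := by
  set z : ℕ → ℝ := fun j => ((j : ℝ) ^ (2 * r))⁻¹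
  have hz : Summable z := summable_nat_pow_inv.2 (by omega)
  let s : ℕ → Set ℕ := fun n => ↑((Icc 1 n).erase k)
  have hlim : Tendsto (fun n => ∑' j, (s n).indicator (chebyshevScaledTerm r n) j) atTop
      (𝓝 (∑' j, if j = k then 0 else 2 ^ r / π ^ (2 * r) * z j)) := by
    refine tendsto_tsum_of_dominated_convergence (hz.mul_left (2 ^ r)⁻¹) (fun j => ?_)
      (.of_forall fun n j => ?_)
    · rcases eq_or_ne j k with rfl | hjk
      · simp [s]
      rcases eq_or_ne j 0 with rfl | hj
      · -- the limit term vanishes through the junk value `(0 ^ (2 * r))⁻¹ = 0`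
        simp [s, z, hr]
      rw [if_neg hjk]
      refine (tendsto_chebyshevScaledTerm r hj).congr' ?_
      filter_upwards [eventually_ge_atTop j] with n hn
      rw [Set.indicator_of_mem (by simp [s, hjk, Nat.one_le_iff_ne_zero.2 hj, hn])]
    · by_cases hjs : j ∈ s n
      · have hj : j ≠ 0 ∧ j ≤ n := by simp_all [s]; omega
        rw [Set.indicator_of_mem hjs, Real.norm_of_nonneg (chebyshevScaledTerm_nonneg r n j)]
        exact chebyshevScaledTerm_le hj.1 hj.2
      · rw [Set.indicator_of_notMem hjs, norm_zero]
        positivity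
  rw [eq_sub_of_add_eq' ((hz.mul_left _).tsum_eq_add_tsum_ite k).symm, tsum_mul_left,
    ← mul_sub] at hlim
  simpa only [← sum_eq_tsum_indicator, s] using hlim

theorem stmt_8_general (r : ℕ) (hr : 1 ≤ r) (k : ℕ) :
    Filter.Tendsto
      (fun n : ℕ =>
        (((∑ j ∈ (Finset.Icc 1 n).erase k, 1 / (1 - Real.cos (j * Real.pi / n)) ^ r) /
          (n : ℝ) ^ (2 * r) : ℝ) : ℂ))
      Filter.atTop
      (nhds ((2 ^ r / (Real.pi : ℂ) ^ (2 * r)) *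
        (riemannZeta (2 * r) - 1 / (k : ℂ) ^ (2 * r)))) := by
  have hzeta : riemannZeta (2 * r) = ((∑' j : ℕ, ((j : ℝ) ^ (2 * r))⁻¹ : ℝ) : ℂ) := by
    rw [← Nat.cast_ofNat, ← Nat.cast_mul, zeta_nat_eq_tsum_of_gt_one (by omega),
      Complex.ofReal_tsum]
    simp
  have hlim := (Complex.continuous_ofReal.tendsto _).comp
    (tendsto_sum_erase_chebyshevScaledTerm (by omega : r ≠ 0) k)
  convert hlim using 2 with n
  · simp only [sum_div_pow_eq_sum_chebyshevScaledTerm, Function.comp_apply]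
  · rw [hzeta]
    push_cast
    ring

/-- For the Chebyshev points `x_j = cos(jπ/n)`, the power sum at the node
`x_0 = 1` with the node `x_k` excluded, `P_r^{0,k}(n) = Σ_{j=1, j≠k}^n 1/(1 − x_j)^r`,
satisfies `lim_{n→∞} P_r^{0,k}(n)/n^{2r} = (2^r/π^{2r})(ζ(2r) − 1/k^{2r})`. -/
theorem stmt_8 (r : ℕ) (hr : 1 ≤ r) (k : ℕ) (hk : 1 ≤ k) :
    Filter.Tendsto
      (fun n : ℕ =>
        (((∑ j ∈ (Finset.Icc 1 n).erase k, 1 / (1 - Real.cos (j * Real.pi / n)) ^ r) /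
          (n : ℝ) ^ (2 * r) : ℝ) : ℂ))
      Filter.atTop
      (nhds ((2 ^ r / (Real.pi : ℂ) ^ (2 * r)) *
        (riemannZeta (2 * r) - 1 / (k : ℂ) ^ (2 * r)))) :=
  stmt_8_general r hr k
end
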